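/- Let A be a unital Banach algebra and X a unit-linked Banach A-bimodule. Let p < 1 and θ ≥ 0. Suppose f : A → X satisfies f(0) = 0 and g : A → X satisfies g(0) = g(1) = 0, such that ‖f(a + λb + c²) − f(a) − λf(b) − c·f(c) − g(c)·c‖ ≤ θ‖f(c)‖ and ‖g(λab + λc) − λa·g(b) − λ·g(a)·b − λg(c)‖ ≤ θ(‖a‖^p + ‖b‖^p + ‖c‖^p) for all a, b, c ∈ A and all λ ∈ ℂ with |λ| = 1. Then f is ℂ-linear. -/

import Mathlib

/-!
Taking `c = 0` in the first inequality makes its right-hand side vanish, so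
`f (a + μ • b) = f a + μ • f b` for every unimodular `μ`. Hence `f` is additive and commutes with
unimodular scalars. Every complex number of modulus at most `2` is a sum of two unimodular ones,
and every complex number is a natural multiple of such a number, so `f` is `ℂ`-linear.
-/

open Filter Topology MulOpposite

set_option linter.unusedSectionVars false
set_option linter.unusedVariables false

namespace Complex

/-- `μ = ‖μ‖ e^{i arg μ}` with `‖μ‖ = 2 cos φ`, and `2 cos φ = e^{iφ} + e^{-iφ}`. -/
theorem exists_norm_eq_one_add_eq_of_norm_le_two {μ : ℂ} (hμ : ‖μ‖ ≤ 2) :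
    ∃ u v : ℂ, ‖u‖ = 1 ∧ ‖v‖ = 1 ∧ u + v = μ := by
  set φ := Real.arccos (‖μ‖ / 2)
  have hcos : 2 * Real.cos φ = ‖μ‖ := by
    rw [Real.cos_arccos (by linarith [norm_nonneg μ]) (by linarith)]
    ring
  refine ⟨exp (↑(arg μ + φ) * I), exp (↑(arg μ - φ) * I),
    norm_exp_ofReal_mul_I _, norm_exp_ofReal_mul_I _, ?_⟩
  calc exp (↑(arg μ + φ) * I) + exp (↑(arg μ - φ) * I)
      = (2 * cos φ) * exp (arg μ * I) := by
        rw [two_cos, ofReal_add, ofReal_sub, add_mul, sub_mul, exp_add, exp_sub, neg_mul,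
          exp_neg, div_eq_mul_inv]
        ring
    _ = μ := by rw [← ofReal_cos, ← ofReal_ofNat, ← ofReal_mul, hcos, norm_mul_exp_arg_mul_I]

end Complex

theorem map_smul_of_map_add_of_map_unit_smul {E F : Type*} [AddCommGroup E] [Module ℂ E]
    [AddCommGroup F] [Module ℂ F] (f : E → F) (hadd : ∀ a b, f (a + b) = f a + f b)
    (hunit : ∀ μ : ℂ, ‖μ‖ = 1 → ∀ a, f (μ • a) = μ • f a) (μ : ℂ) (a : E) :
    f (μ • a) = μ • f a := by
  have hsmall : ∀ ν : ℂ, ‖ν‖ ≤ 2 → ∀ a, f (ν • a) = ν • f a := by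
    intro ν hν a
    obtain ⟨u, v, hu, hv, rfl⟩ := Complex.exists_norm_eq_one_add_eq_of_norm_le_two hν
    rw [add_smul, hadd, hunit u hu, hunit v hv, add_smul]
  obtain ⟨n, hn⟩ := exists_nat_ge ‖μ‖
  have hdiv : ‖μ / (n + 1 : ℕ)‖ ≤ 2 := by
    rw [norm_div, Complex.norm_natCast, div_le_iff₀ (by positivity)]
    push_cast
    linarith [norm_nonneg μ]
  have hμ : μ = ((n + 1 : ℕ) : ℂ) * (μ / (n + 1 : ℕ)) := by
    push_cast
    field_simp
  let fHom : E →+ F := AddMonoidHom.mk' f hadd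
  calc f (μ • a) = fHom (((n + 1 : ℕ) : ℂ) • (μ / (n + 1 : ℕ)) • a) := by rw [smul_smul, ← hμ]; rfl
    _ = μ • f a := by
      rw [map_natCast_smul fHom ℂ ℂ]
      simp only [fHom, AddMonoidHom.mk'_apply]
      rw [hsmall _ hdiv, smul_smul, ← hμ]

section

variable {A X : Type*}
  [NormedRing A] [NormedAlgebra ℂ A] [CompleteSpace A]
  [NormedAddCommGroup X] [NormedSpace ℂ X] [CompleteSpace X]
  [Module A X] [Module Aᵐᵒᵖ X]
  [IsBoundedSMul A X] [IsBoundedSMul Aᵐᵒᵖ X]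
  [SMulCommClass A Aᵐᵒᵖ X]
  [IsScalarTower ℂ A X] [IsScalarTower ℂ Aᵐᵒᵖ X]

/-- A Jordan derivation from `A` into the bimodule `X`: a `ℂ`-linear map `δ` with
`δ(a²) = a·δ(a) + δ(a)·a`. -/
def IsJordanDeriv (δ : A → X) : Prop :=
  (∀ x y : A, δ (x + y) = δ x + δ y) ∧ (∀ (μ : ℂ) (x : A), δ (μ • x) = μ • δ x) ∧
    ∀ a : A, δ (a ^ 2) = a • δ a + op a • δ a

/-- A generalized Jordan derivation: a `ℂ`-linear map `d` such that there is a Jordan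
derivation `δ` with `d(a²) = a·d(a) + δ(a)·a`. -/
def IsGenJordanDeriv (d : A → X) : Prop :=
  (∀ x y : A, d (x + y) = d x + d y) ∧ (∀ (μ : ℂ) (x : A), d (μ • x) = μ • d x) ∧
    ∃ δ : A → X, IsJordanDeriv δ ∧ ∀ a : A, d (a ^ 2) = a • d a + op a • δ a

theorem stmt_general (f g : A → X) (θ : ℝ)
    (hf0 : f 0 = 0)
    (h1 : ∀ (a b c : A) (μ : ℂ), ‖μ‖ = 1 →
      ‖f (a + μ • b + c ^ 2) - f a - μ • f b - c • f c - op c • g c‖ ≤ θ * ‖f c‖) :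
    (∀ a b : A, f (a + b) = f a + f b) ∧ ∀ (μ : ℂ) (a : A), f (μ • a) = μ • f a := by
  have hunit_add : ∀ (a b : A) (μ : ℂ), ‖μ‖ = 1 → f (a + μ • b) = f a + μ • f b := by
    intro a b μ hμ
    have h := h1 a b 0 μ hμ
    rw [hf0, norm_zero, mul_zero, norm_le_zero_iff] at h
    simpa [sub_sub, sub_eq_zero] using h
  have hadd : ∀ a b : A, f (a + b) = f a + f b := fun a b => by
    simpa using hunit_add a b 1 norm_one
  exact ⟨hadd, map_smul_of_map_add_of_map_unit_smul f hadd fun μ hμ a => by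
    simpa [hf0] using hunit_add 0 a μ hμ⟩

theorem stmt (f g : A → X) (θ p : ℝ) (hθ : 0 ≤ θ) (hp : p < 1)
    (hf0 : f 0 = 0) (hg0 : g 0 = 0) (hg1 : g 1 = 0)
    (h1 : ∀ (a b c : A) (μ : ℂ), ‖μ‖ = 1 →
      ‖f (a + μ • b + c ^ 2) - f a - μ • f b - c • f c - op c • g c‖ ≤ θ * ‖f c‖)
    (h2 : ∀ (a b c : A) (μ : ℂ), ‖μ‖ = 1 →
      ‖g (μ • (a * b) + μ • c) - μ • a • g b - μ • op b • g a - μ • g c‖ ≤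
        θ * (‖a‖ ^ p + ‖b‖ ^ p + ‖c‖ ^ p)) :
    (∀ a b : A, f (a + b) = f a + f b) ∧ ∀ (μ : ℂ) (a : A), f (μ • a) = μ • f a :=
  stmt_general f g θ hf0 h1

end
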